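/- Suppose the sequence g^t = (β^t, z^t, u^t), with z^t ∈ Z_r for all t, satisfies the PPA variational inequality with a symmetric positive definite matrix H. Then for every saddle point g*, the sequence t ↦ ‖g^t − g*‖_H is monotonically non-increasing. -/

import Mathlib

open Matrix Filter

noncomputable section

/-- Vectors in ℝ^p. -/
abbrev Vec (p : ℕ) := Fin p → ℝ

/-- Triples `g = (β, z, u) ∈ ℝ^p × ℝ^p × ℝ^p`. -/
abbrev Trip (p : ℕ) := Vec p × Vec p × Vec p

/-- Index type for ℝ^{3p}. -/
abbrev Idx3 (p : ℕ) := Fin p ⊕ Fin p ⊕ Fin p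

/-- Identify a triple `(β, z, u)` with a vector in ℝ^{3p}. -/
def toSum {p : ℕ} (g : Trip p) : Idx3 p → ℝ := Sum.elim g.1 (Sum.elim g.2.1 g.2.2)

/-- The operator `F(β, z, u) = (−Aᵀu, u, Aβ − z − c)`. -/
def Fop {p : ℕ} (A : Matrix (Fin p) (Fin p) ℝ) (c : Vec p) (g : Trip p) : Trip p :=
  (-(Aᵀ *ᵥ g.2.2), g.2.2, A *ᵥ g.1 - g.2.1 - c)

/-- Membership in the box `Z_r = {z : ‖z‖_∞ ≤ r}`. -/
def inZ {p : ℕ} (r : ℝ) (z : Vec p) : Prop := ∀ j, |z j| ≤ r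

/-- The ℓ₁ norm on ℝ^p. -/
def l1 {p : ℕ} (β : Vec p) : ℝ := ∑ j, |β j|

/-- The Euclidean inner product on ℝ^{3p}. -/
def ip {p : ℕ} (v w : Trip p) : ℝ := toSum v ⬝ᵥ toSum w

/-- The bilinear form `⟨v, H w⟩` on ℝ^{3p}; in particular `ipH H v v = ‖v‖_H²`. -/
def ipH {p : ℕ} (H : Matrix (Idx3 p) (Idx3 p) ℝ) (v w : Trip p) : ℝ :=
  toSum v ⬝ᵥ (H *ᵥ toSum w)

/-- `g* = (β*, z*, u*)` is a saddle point: `z* ∈ Z_r` and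
`‖β‖₁ − ‖β*‖₁ + ⟨g − g*, F(g*)⟩ ≥ 0` for all `g = (β, z, u)` with `z ∈ Z_r`. -/
def IsSaddle {p : ℕ} (A : Matrix (Fin p) (Fin p) ℝ) (c : Vec p) (r : ℝ)
    (gs : Trip p) : Prop :=
  inZ r gs.2.1 ∧ ∀ g : Trip p, inZ r g.2.1 →
    0 ≤ l1 g.1 - l1 gs.1 + ip (g - gs) (Fop A c gs)

/-- The sequence `g^t` satisfies the PPA variational inequality with matrix `H`:
for every `t` and every `g = (β, z, u)` with `z ∈ Z_r`,
`‖β‖₁ − ‖β^{t+1}‖₁ + ⟨g − g^{t+1}, F(g^{t+1})⟩ ≥ ⟨g − g^{t+1}, H(g^t − g^{t+1})⟩`. -/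
def SatisfiesPVI {p : ℕ} (A : Matrix (Fin p) (Fin p) ℝ) (c : Vec p) (r : ℝ)
    (H : Matrix (Idx3 p) (Idx3 p) ℝ) (g : ℕ → Trip p) : Prop :=
  ∀ t : ℕ, ∀ gg : Trip p, inZ r gg.2.1 →
    ipH H (gg - g (t + 1)) (g t - g (t + 1)) ≤
      l1 gg.1 - l1 (g (t + 1)).1 + ip (gg - g (t + 1)) (Fop A c (g (t + 1)))

/-!
With `b = g^{t+1} − g*` and `d = g^t − g^{t+1}`, add the PPA inequality tested at `g*` to the
saddle inequality tested at `g^{t+1}`: the `ℓ₁` terms cancel, and so do the `F` terms because `F`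
is affine with skew-symmetric linear part. What remains is `⟨b, H d⟩ ≥ 0`, hence
`‖g^t − g*‖²_H = ‖b‖²_H + 2⟨b, H d⟩ + ‖d‖²_H ≥ ‖b‖²_H`.
-/

lemma Matrix.PosSemidef.dotProduct_mulVec_self_le_add {ι : Type*} [Fintype ι]
    {H : Matrix ι ι ℝ} (hH : H.PosSemidef) {x y : ι → ℝ} (hxy : 0 ≤ y ⬝ᵥ H *ᵥ x) :
    y ⬝ᵥ H *ᵥ y ≤ (x + y) ⬝ᵥ H *ᵥ (x + y) := by
  have hsymm : x ⬝ᵥ H *ᵥ y = y ⬝ᵥ H *ᵥ x := by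
    conv_lhs => rw [← hH.1.eq, conjTranspose_eq_transpose_of_trivial]
    exact dotProduct_transpose_mulVec H x y
  have hx : 0 ≤ x ⬝ᵥ H *ᵥ x := by simpa using hH.dotProduct_mulVec_nonneg x
  simp only [mulVec_add, dotProduct_add, add_dotProduct]
  linarith

section Triples

variable {p : ℕ}

lemma toSum_add (v w : Trip p) : toSum (v + w) = toSum v + toSum w := by
  ext (_ | _ | _) <;> rfl

lemma toSum_sub (v w : Trip p) : toSum (v - w) = toSum v - toSum w := by
  ext (_ | _ | _) <;> rfl

lemma ip_sub_left (u v w : Trip p) : ip (u - v) w = ip u w - ip v w := by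
  simp only [ip, toSum_sub, sub_dotProduct]

lemma ip_sub_right (u v w : Trip p) : ip u (v - w) = ip u v - ip u w := by
  simp only [ip, toSum_sub, dotProduct_sub]

lemma ipH_sub_left (H : Matrix (Idx3 p) (Idx3 p) ℝ) (u v w : Trip p) :
    ipH H (u - v) w = ipH H u w - ipH H v w := by
  simp only [ipH, toSum_sub, sub_dotProduct]

lemma ip_eq_add_dotProduct (v w : Trip p) :
    ip v w = v.1 ⬝ᵥ w.1 + v.2.1 ⬝ᵥ w.2.1 + v.2.2 ⬝ᵥ w.2.2 := by
  simp only [ip, toSum, dotProduct, Fintype.sum_sum_type, Sum.elim_inl, Sum.elim_inr, add_assoc]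

variable (A : Matrix (Fin p) (Fin p) ℝ) (c : Vec p)

lemma Fop_sub_Fop (v w : Trip p) : Fop A c v - Fop A c w = Fop A 0 (v - w) := by
  ext <;> simp [Fop, mulVec_sub] <;> ring

lemma ip_Fop_zero_self (v : Trip p) : ip v (Fop A 0 v) = 0 := by
  simp only [ip_eq_add_dotProduct, Fop, dotProduct_neg, dotProduct_transpose_mulVec, sub_zero,
    dotProduct_sub, dotProduct_comm v.2.2 v.2.1]
  ring

lemma ip_sub_Fop_eq (v w : Trip p) : ip (v - w) (Fop A c v) = ip (v - w) (Fop A c w) := by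
  rw [← sub_eq_zero, ← ip_sub_right, Fop_sub_Fop, ip_Fop_zero_self]

end Triples

lemma SatisfiesPVI.ipH_sub_saddle_nonneg {p : ℕ} {A : Matrix (Fin p) (Fin p) ℝ} {c : Vec p}
    {r : ℝ} {H : Matrix (Idx3 p) (Idx3 p) ℝ} {g : ℕ → Trip p} {gs : Trip p}
    (hPVI : SatisfiesPVI A c r H g) (hgs : IsSaddle A c r gs) (t : ℕ)
    (hz : inZ r (g (t + 1)).2.1) :
    0 ≤ ipH H (g (t + 1) - gs) (g t - g (t + 1)) := by
  have hvi := hPVI t gs hgs.1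
  have hsaddle := hgs.2 (g (t + 1)) hz
  have hskew := ip_sub_Fop_eq A c gs (g (t + 1))
  rw [ipH_sub_left] at hvi ⊢
  simp only [ip_sub_left] at hvi hsaddle hskew
  linarith

theorem stmt11_general {p : ℕ} (A : Matrix (Fin p) (Fin p) ℝ) (c : Vec p) (r : ℝ)
    (H : Matrix (Idx3 p) (Idx3 p) ℝ) (hH : H.PosDef)
    (g : ℕ → Trip p) (hz : ∀ t, inZ r (g t).2.1)
    (hPVI : SatisfiesPVI A c r H g) :
    ∀ gs : Trip p, IsSaddle A c r gs →
      Antitone (fun t : ℕ => Real.sqrt (ipH H (g t - gs) (g t - gs))) := by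
  intro gs hgs
  refine antitone_nat_of_succ_le fun t => Real.sqrt_le_sqrt ?_
  have hcross := hPVI.ipH_sub_saddle_nonneg hgs t (hz (t + 1))
  rw [← sub_add_sub_cancel (g t) (g (t + 1)) gs]
  simp only [ipH, toSum_add] at hcross ⊢
  exact hH.posSemidef.dotProduct_mulVec_self_le_add hcross

/-- Monotonicity: if `g^t` (with `z^t ∈ Z_r`) satisfies the PPA variational inequality
with symmetric positive definite `H`, then for every saddle point `g*` the sequence
`t ↦ ‖g^t − g*‖_H` is monotonically non-increasing. -/
theorem stmt11 {p : ℕ} (A : Matrix (Fin p) (Fin p) ℝ) (c : Vec p) (r : ℝ) (hr : 0 ≤ r)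
    (H : Matrix (Idx3 p) (Idx3 p) ℝ) (hH : H.PosDef)
    (g : ℕ → Trip p) (hz : ∀ t, inZ r (g t).2.1)
    (hPVI : SatisfiesPVI A c r H g) :
    ∀ gs : Trip p, IsSaddle A c r gs →
      Antitone (fun t : ℕ => Real.sqrt (ipH H (g t - gs) (g t - gs))) :=
  stmt11_general A c r H hH g hz hPVI
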